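/- arXiv:2007.05437 — 4 statements merged into one kernel-verified Lean document; each statement's English description precedes it below -/
import Mathlib

section
/- Let G be a finite simple graph, v a vertex, and let the ego-network G_{N(v)} be the subgraph of G induced by the neighbors of v. If H is a subgraph of G_{N(v)} in which every edge has support at least k-2 within H, then the graph H' obtained by adding v together with all edges from v to vertices of H has the property that every edge of H' has support at least k-1 within H'. -/
open SimpleGraph

/-- The support of an edge `(u,v)` in `H`: the number of common neighbors of `u` and `v`. -/
noncomputable def edgeSup {V : Type*} (H : SimpleGraph V) (u v : V) : ℕ :=
  Set.ncard {w | H.Adj u w ∧ H.Adj v w}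

/-- The ego-network of `v` in `G`: the subgraph of `G` induced by the neighbors of `v`
(as a graph on the same vertex set, with all non-neighbors isolated). -/
def ego {V : Type*} (G : SimpleGraph V) (v : V) : SimpleGraph V where
  Adj a b := G.Adj a b ∧ G.Adj v a ∧ G.Adj v b
  symm := ⟨fun a b h => ⟨h.1.symm, h.2.2, h.2.1⟩⟩
  loopless := ⟨fun a h => G.loopless.irrefl a h.1⟩

/-! Joining a vertex `v` that has no edge in `H` to every non-isolated vertex of `H` raises the
support of every old edge by one (the new common neighbour `v`), and gives each new edge `vu` the
whole neighbourhood of `u` in `H` as common neighbours, which is one more than the support of any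
edge `uw` of `H`. -/

namespace SimpleGraph

variable {V : Type*}

theorem edgeSup_eq_ncard_commonNeighbors (H : SimpleGraph V) (u w : V) :
    edgeSup H u w = (H.commonNeighbors u w).ncard :=
  rfl

theorem edgeSup_comm (H : SimpleGraph V) (u w : V) : edgeSup H u w = edgeSup H w u := by
  simp only [edgeSup_eq_ncard_commonNeighbors, commonNeighbors_symm]

theorem edgeSup_lt_of_commonNeighbors_ssubset [Finite V] {H H' : SimpleGraph V} {a b c d x : V}
    (hsub : H.commonNeighbors a b ⊆ H'.commonNeighbors c d)
    (hx : x ∈ H'.commonNeighbors c d) (hx' : x ∉ H.commonNeighbors a b) :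
    edgeSup H a b < edgeSup H' c d :=
  Set.ncard_lt_ncard ((Set.ssubset_iff_of_subset hsub).2 ⟨x, hx, hx'⟩) (Set.toFinite _)

theorem notMem_support_of_le_ego {G H : SimpleGraph V} {v : V} (hH : H ≤ ego G v) :
    v ∉ H.support := fun ⟨_, hvx⟩ => G.loopless.irrefl v (hH hvx).2.1

def addApex (H : SimpleGraph V) (v : V) : SimpleGraph V :=
  H ⊔ fromEdgeSet {e | ∃ u ∈ H.support, e = s(v, u)}

section addApex

variable {H : SimpleGraph V} {v : V}

theorem le_addApex : H ≤ H.addApex v := le_sup_left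

theorem addApex_adj_apex (hv : v ∉ H.support) {u : V} (hu : u ∈ H.support) :
    (H.addApex v).Adj v u := by
  refine Or.inr ⟨⟨u, hu, rfl⟩, ?_⟩
  rintro rfl
  exact hv hu

theorem addApex_adj_iff (hv : v ∉ H.support) {a b : V} :
    (H.addApex v).Adj a b ↔
      H.Adj a b ∨ (a = v ∧ b ∈ H.support) ∨ (b = v ∧ a ∈ H.support) := by
  constructor
  · rintro (hab | ⟨⟨u, hu, he⟩, -⟩)
    · exact Or.inl hab
    · rcases Sym2.eq_iff.1 he with ⟨rfl, rfl⟩ | ⟨rfl, rfl⟩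
      exacts [Or.inr (Or.inl ⟨rfl, hu⟩), Or.inr (Or.inr ⟨rfl, hu⟩)]
  · rintro (hab | ⟨rfl, hb⟩ | ⟨rfl, ha⟩)
    exacts [le_addApex hab, addApex_adj_apex hv hb, (addApex_adj_apex hv ha).symm]

variable [Finite V]

theorem edgeSup_lt_edgeSup_addApex (hv : v ∉ H.support) {a b : V} (hab : H.Adj a b) :
    edgeSup H a b < edgeSup (H.addApex v) a b := by
  refine edgeSup_lt_of_commonNeighbors_ssubset (x := v) ?_ ?_ ?_
  · exact fun x ⟨hax, hbx⟩ => ⟨le_addApex hax, le_addApex hbx⟩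
  · exact ⟨(addApex_adj_apex hv ⟨b, hab⟩).symm, (addApex_adj_apex hv ⟨a, hab.symm⟩).symm⟩
  · exact fun ⟨hav, _⟩ => hv ⟨a, hav.symm⟩

theorem edgeSup_lt_edgeSup_addApex_apex (hv : v ∉ H.support) {u w : V} (huw : H.Adj u w) :
    edgeSup H u w < edgeSup (H.addApex v) v u := by
  refine edgeSup_lt_of_commonNeighbors_ssubset (x := w) ?_ ?_ ?_
  · exact fun x ⟨hux, _⟩ => ⟨addApex_adj_apex hv ⟨u, hux.symm⟩, le_addApex hux⟩
  · exact ⟨addApex_adj_apex hv ⟨u, huw.symm⟩, le_addApex huw⟩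
  · exact fun ⟨_, hww⟩ => H.loopless.irrefl w hww

theorem edgeSup_addApex_ge (hv : v ∉ H.support) {m : ℕ}
    (hsup : ∀ u w, H.Adj u w → m ≤ edgeSup H u w) {a b : V} (hab : (H.addApex v).Adj a b) :
    m + 1 ≤ edgeSup (H.addApex v) a b := by
  rcases (addApex_adj_iff hv).1 hab with hab | ⟨rfl, w, hbw⟩ | ⟨rfl, w, haw⟩
  · exact (hsup a b hab).trans_lt (edgeSup_lt_edgeSup_addApex hv hab)
  · exact (hsup b w hbw).trans_lt (edgeSup_lt_edgeSup_addApex_apex hv hbw)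
  · rw [edgeSup_comm]
    exact (hsup a w haw).trans_lt (edgeSup_lt_edgeSup_addApex_apex hv haw)

end addApex

end SimpleGraph

theorem stmt2_general {V : Type*} [Fintype V] (G : SimpleGraph V) (v : V) (k : ℕ)
    (H : SimpleGraph V) (hH : H ≤ ego G v)
    (hsup : ∀ u w, H.Adj u w → k - 2 ≤ edgeSup H u w) :
    ∀ a b, (H ⊔ SimpleGraph.fromEdgeSet {e | ∃ u ∈ H.support, e = s(v, u)}).Adj a b →
      k - 1 ≤ edgeSup (H ⊔ SimpleGraph.fromEdgeSet {e | ∃ u ∈ H.support, e = s(v, u)}) a b := by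
  intro a b hab
  exact (show k - 1 ≤ k - 2 + 1 by omega).trans
    (edgeSup_addApex_ge (notMem_support_of_le_ego hH) hsup hab)

theorem stmt2 {V : Type*} [Fintype V] (G : SimpleGraph V) (v : V) (k : ℕ) (hk : 2 ≤ k)
    (H : SimpleGraph V) (hH : H ≤ ego G v)
    (hsup : ∀ u w, H.Adj u w → k - 2 ≤ edgeSup H u w) :
    ∀ a b, (H ⊔ SimpleGraph.fromEdgeSet {e | ∃ u ∈ H.support, e = s(v, u)}).Adj a b →
      k - 1 ≤ edgeSup (H ⊔ SimpleGraph.fromEdgeSet {e | ∃ u ∈ H.support, e = s(v, u)}) a b :=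
  stmt2_general G v k H hH hsup
end

section
/- For any vertex v of a finite simple graph G, the number of connected components of the k-truss of the ego-network G_{N(v)} is at most ⌊d(v)/k⌋, where d(v) is the degree of v. -/
open SimpleGraph

/-- The support of an edge `(u,v)` inside a subgraph `H`: the number of common
neighbors of `u` and `v` within `H`. -/
noncomputable def supS {V : Type*} {G : SimpleGraph V} (H : G.Subgraph) (u v : V) : ℕ :=
  Set.ncard {w | H.Adj u w ∧ H.Adj v w}

/-!
Each connected component of the truss contains an edge `xy`, hence `x`, `y` and the at least
`k - 2` common neighbours supporting `xy`: at least `k` vertices. The components are disjoint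
and their vertices are neighbours of `v`, so there are at most `d(v) / k` of them.
-/

namespace SimpleGraph

variable {V : Type*}

theorem Adj.ncard_commonNeighbors_add_two_le [Finite V] {H : SimpleGraph V} {x y : V}
    (hxy : H.Adj x y) :
    (H.commonNeighbors x y).ncard + 2 ≤ (H.connectedComponentMk x).supp.ncard := by
  have hsub : insert x (insert y (H.commonNeighbors x y)) ⊆ (H.connectedComponentMk x).supp := by
    rintro w (rfl | rfl | hw)
    · exact rfl
    · exact ConnectedComponent.connectedComponentMk_eq_of_adj hxy.symm
    · exact ConnectedComponent.connectedComponentMk_eq_of_adj hw.1.symm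
  have hcard : (insert x (insert y (H.commonNeighbors x y))).ncard
      = (H.commonNeighbors x y).ncard + 2 := by
    rw [Set.ncard_insert_of_notMem _ (Set.toFinite _),
      Set.ncard_insert_of_notMem (notMem_commonNeighbors_right _ _ _)]
    rintro (rfl | h)
    · exact hxy.ne rfl
    · exact notMem_commonNeighbors_left _ _ _ h
  exact hcard ▸ Set.ncard_le_ncard hsub

theorem ConnectedComponent.le_ncard_supp_of_commonNeighbors [Finite V] {H : SimpleGraph V}
    {k : ℕ} (hspan : ∀ x, ∃ y, H.Adj x y)
    (htruss : ∀ x y, H.Adj x y → k - 2 ≤ (H.commonNeighbors x y).ncard)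
    (c : H.ConnectedComponent) : k ≤ c.supp.ncard := by
  induction c using ConnectedComponent.ind with
  | h x =>
    obtain ⟨y, hxy⟩ := hspan x
    have := hxy.ncard_commonNeighbors_add_two_le
    have := htruss x y hxy
    omega

theorem ConnectedComponent.card_mul_le_card_of_le_ncard_supp [Finite V] {H : SimpleGraph V}
    {k : ℕ} (h : ∀ c : H.ConnectedComponent, k ≤ c.supp.ncard) :
    Nat.card H.ConnectedComponent * k ≤ Nat.card V := by
  classical
  have := Fintype.ofFinite V
  have := Fintype.ofFinite H.ConnectedComponent
  rw [Nat.card_eq_fintype_card, Nat.card_eq_fintype_card, mul_comm]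
  refine Finset.mul_card_image_le_card_of_maps_to (f := H.connectedComponentMk)
    (fun _ _ ↦ Finset.mem_univ _) k fun c _ ↦ ?_
  convert h c
  rw [← Set.ncard_coe_finset]
  congr 1
  ext x
  simp [ConnectedComponent.mem_supp_iff]

namespace Subgraph

variable {G : SimpleGraph V}

theorem ncard_commonNeighbors_coe (T : G.Subgraph) {x y : V} (hx : x ∈ T.verts)
    (hy : y ∈ T.verts) :
    (T.coe.commonNeighbors ⟨x, hx⟩ ⟨y, hy⟩).ncard = supS T x y := by
  rw [supS, ← Set.ncard_image_of_injective _ Subtype.val_injective]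
  congr 1
  ext w
  constructor
  · rintro ⟨w, hw, rfl⟩
    exact hw
  · rintro ⟨hxw, hyw⟩
    exact ⟨⟨w, hxw.snd_mem⟩, ⟨hxw, hyw⟩, rfl⟩

theorem support_subset_neighborSet {v : V} (T : (ego G v).Subgraph) :
    T.support ⊆ G.neighborSet v := by
  rintro x ⟨y, hxy⟩
  exact (T.adj_sub hxy).2.1

end Subgraph

end SimpleGraph

theorem stmt4 {V : Type*} [Fintype V] (G : SimpleGraph V) (v : V) (k : ℕ) (hk : 2 ≤ k)
    (T : (ego G v).Subgraph)
    (hspan : ∀ x ∈ T.verts, ∃ y, T.Adj x y)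
    (htruss : ∀ x y, T.Adj x y → k - 2 ≤ supS T x y) :
    Nat.card T.coe.ConnectedComponent ≤ (G.neighborSet v).ncard / k := by
  have hcomp : ∀ c : T.coe.ConnectedComponent, k ≤ c.supp.ncard := by
    refine ConnectedComponent.le_ncard_supp_of_commonNeighbors (fun ⟨x, hx⟩ ↦ ?_)
      fun ⟨x, hx⟩ ⟨y, hy⟩ hxy ↦ ?_
    · obtain ⟨y, hxy⟩ := hspan x hx
      exact ⟨⟨y, hxy.snd_mem⟩, hxy⟩
    · rw [Subgraph.ncard_commonNeighbors_coe]
      exact htruss x y hxy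
  have hverts : Nat.card T.verts ≤ (G.neighborSet v).ncard := by
    rw [Nat.card_coe_set_eq]
    exact Set.ncard_le_ncard
      (fun x hx ↦ T.support_subset_neighborSet (hspan x hx)) (Set.toFinite _)
  rw [Nat.le_div_iff_mul_le (by omega)]
  exact (ConnectedComponent.card_mul_le_card_of_le_ncard_supp hcomp).trans hverts
end

section
/- In a weighted finite simple graph W (with weights given by edge trussness in an ego-network), a maximum-weight spanning forest F of W has the property that for every threshold k, the connected components of the subgraph of F consisting of edges of weight at least k have the same vertex sets as the connected components of the subgraph of W consisting of edges of weight at least k. -/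
open SimpleGraph

/-- The subgraph of `G` formed by the edges of weight at least `k`
(with respect to the edge-weight function `w`). -/
def restrictW {V : Type*} (G : SimpleGraph V) (w : Sym2 V → ℕ) (k : ℕ) : SimpleGraph V where
  Adj a b := G.Adj a b ∧ k ≤ w s(a, b)
  symm := ⟨fun a b h => ⟨h.1.symm, by rw [Sym2.eq_swap]; exact h.2⟩⟩
  loopless := ⟨fun a h => G.loopless.irrefl a h.1⟩

/-- `F` is a spanning forest of `W`: an acyclic subgraph with the same
connected components as `W`. -/
def IsSpanningForest {V : Type*} (W F : SimpleGraph V) : Prop :=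
  F ≤ W ∧ F.IsAcyclic ∧ ∀ a b : V, F.Reachable a b ↔ W.Reachable a b

/-- The total weight of a graph: the sum of the weights of its edges. -/
noncomputable def totalWeight {V : Type*} (F : SimpleGraph V) (w : Sym2 V → ℕ) : ℕ :=
  ∑ᶠ e ∈ F.edgeSet, w e

/-!
If an edge `uv` of `W` with weight at least `k` joined two components of `F_{≥k}`, the path
from `u` to `v` in the forest `F` would contain an edge `xy` of weight below `k`, and `xy`
separates `u` from `v` in `F - xy`. Exchanging `xy` for `uv` then gives a spanning forest of
larger weight. So every edge of `W_{≥k}` joins vertices already connected in `F_{≥k}`; the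
converse is `F ≤ W`.
-/

namespace SimpleGraph

variable {V : Type*} {G H : SimpleGraph V} {u v x y : V}

theorem reachable_le_of_adj_le (h : G.Adj ≤ H.Reachable) : G.Reachable ≤ H.Reachable := by
  rw [reachable_eq_reflTransGen, reachable_eq_reflTransGen] at *
  exact Relation.reflTransGen_closed h

theorem reachable_sup_edge_or (h : (H ⊔ edge x y).Reachable u v) :
    H.Reachable u v ∨ (H.Reachable u x ∧ H.Reachable y v) ∨
      (H.Reachable u y ∧ H.Reachable x v) := by
  rw [reachable_eq_reflTransGen] at h
  induction h with
  | refl => exact Or.inl .rfl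
  | @tail a b _ hab ih =>
    rcases hab with hab | hab
    · have hab := hab.reachable
      rcases ih with h | ⟨h₁, h₂⟩ | ⟨h₁, h₂⟩
      · exact Or.inl (h.trans hab)
      · exact Or.inr (Or.inl ⟨h₁, h₂.trans hab⟩)
      · exact Or.inr (Or.inr ⟨h₁, h₂.trans hab⟩)
    · have hx : H.Reachable x x := .rfl
      have hy : H.Reachable y y := .rfl
      obtain ⟨⟨rfl, rfl⟩ | ⟨rfl, rfl⟩, -⟩ := (edge_adj _ _ _ _).mp hab <;> tauto

theorem reachable_sup_edge_self : (H ⊔ edge u v).Reachable u v := by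
  rcases eq_or_ne u v with rfl | hne
  · exact .rfl
  · exact Adj.reachable (Or.inr ((edge_adj _ _ _ _).mpr ⟨Or.inl ⟨rfl, rfl⟩, hne⟩))

theorem reachable_sup_edge_of_reachable_sup_edge (h : (H ⊔ edge x y).Reachable u v)
    (hn : ¬ H.Reachable u v) : (H ⊔ edge u v).Reachable x y := by
  have hH : H ≤ H ⊔ edge u v := le_sup_left
  rcases reachable_sup_edge_or h with h | ⟨hux, hyv⟩ | ⟨huy, hxv⟩
  · exact absurd h hn
  · exact (hux.mono hH).symm.trans (reachable_sup_edge_self.trans (hyv.mono hH).symm)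
  · exact (hxv.mono hH).trans (reachable_sup_edge_self.symm.trans (huy.mono hH))

theorem Reachable.reachable_sup_edge_le (huv : G.Reachable u v) (hHG : H ≤ G) :
    (H ⊔ edge u v).Reachable ≤ G.Reachable := by
  refine reachable_le_of_adj_le fun a b hab => hab.elim (fun h => (hHG h).reachable) fun he => ?_
  obtain ⟨⟨rfl, rfl⟩ | ⟨rfl, rfl⟩, -⟩ := (edge_adj _ _ _ _).mp he
  exacts [huv, huv.symm]

theorem IsAcyclic.not_reachable_deleteEdges_of_mem_edges (hG : G.IsAcyclic) {p : G.Walk u v}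
    (hp : p.IsPath) (hxy : s(x, y) ∈ p.edges) : ¬ (G.deleteEdges {s(x, y)}).Reachable u v := by
  classical
  rw [reachable_deleteEdges_iff_exists_walk]
  rintro ⟨q, hq⟩
  have hpq : (⟨p, hp⟩ : G.Path u v) = q.toPath := (hG.subsingleton_path u v).elim _ _
  exact hq (q.edges_toPath_subset_edges (by rwa [← hpq]))

theorem deleteEdges_sup_edge (h : G.Adj x y) : G.deleteEdges {s(x, y)} ⊔ edge x y = G := by
  ext a b
  simp only [sup_adj, deleteEdges_adj, edge_adj, Set.mem_singleton_iff]
  grind [Sym2.eq_iff, G.adj_symm, Adj.ne]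

theorem totalWeight_sup_edge [Finite V] (w : Sym2 V → ℕ) (hne : u ≠ v) (hn : ¬ G.Adj u v) :
    totalWeight (G ⊔ edge u v) w = totalWeight G w + w s(u, v) := by
  have hdisj : Disjoint G.edgeSet {s(u, v)} := Set.disjoint_singleton_right.mpr hn
  rw [totalWeight, totalWeight, edgeSet_sup, edgeSet_edge_of_ne hne,
    finsum_mem_union hdisj (Set.toFinite _) (Set.finite_singleton _), finsum_mem_singleton]

end SimpleGraph

section Forest

variable {V : Type*} {W F : SimpleGraph V} {w : Sym2 V → ℕ} {k : ℕ} {u v x y : V}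

theorem restrictW_mono (h : F ≤ W) : restrictW F w k ≤ restrictW W w k :=
  fun _ _ hab => ⟨h hab.1, hab.2⟩

theorem mem_edgeSet_restrictW {e : Sym2 V} :
    e ∈ (restrictW F w k).edgeSet ↔ e ∈ F.edgeSet ∧ k ≤ w e :=
  Sym2.ind (fun _ _ => Iff.rfl) e

theorem exists_mem_edges_lt_of_not_reachable_restrictW (p : F.Walk u v)
    (h : ¬ (restrictW F w k).Reachable u v) : ∃ e ∈ p.edges, w e < k := by
  by_contra! hp
  exact h ⟨p.transfer _ fun e he =>
    mem_edgeSet_restrictW.2 ⟨p.edges_subset_edgeSet he, hp e he⟩⟩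

theorem IsSpanningForest.exchange (hF : IsSpanningForest W F) (hxy : F.Adj x y)
    (huv : W.Adj u v) (hsep : ¬ (F.deleteEdges {s(x, y)}).Reachable u v) :
    IsSpanningForest W (F.deleteEdges {s(x, y)} ⊔ edge u v) := by
  obtain ⟨hFW, hacyc, hreach⟩ := hF
  have hHF : F.deleteEdges {s(x, y)} ≤ F := deleteEdges_le _
  have hFuv : F.Reachable u v := (hreach u v).2 huv.reachable
  have hxy_reach : (F.deleteEdges {s(x, y)} ⊔ edge u v).Reachable x y :=
    reachable_sup_edge_of_reachable_sup_edge (by rwa [deleteEdges_sup_edge hxy]) hsep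
  refine ⟨sup_le (hHF.trans hFW) ((edge_le_iff _).2 (.inr huv)),
    (hacyc.anti hHF).sup_edge_of_not_reachable hsep, fun a b => ?_⟩
  rw [← hreach]
  refine ⟨fun h => hFuv.reachable_sup_edge_le hHF _ _ h, fun h => ?_⟩
  rw [← deleteEdges_sup_edge hxy] at h
  exact hxy_reach.reachable_sup_edge_le le_sup_left _ _ h

theorem IsSpanningForest.reachable_restrictW_of_adj [Finite V] (hF : IsSpanningForest W F)
    (hmax : ∀ F', IsSpanningForest W F' → totalWeight F' w ≤ totalWeight F w)
    (huv : W.Adj u v) (hk : k ≤ w s(u, v)) : (restrictW F w k).Reachable u v := by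
  by_contra hnr
  obtain ⟨p, hp⟩ := ((hF.2.2 u v).2 huv.reachable).exists_isPath
  obtain ⟨e, he, hwe⟩ := exists_mem_edges_lt_of_not_reachable_restrictW p hnr
  induction e using Sym2.ind with | h x y =>
  have hxy : F.Adj x y := p.adj_of_mem_edges he
  have hsep := hF.2.1.not_reachable_deleteEdges_of_mem_edges hp he
  have hle := hmax _ (hF.exchange hxy huv hsep)
  have hwF := totalWeight_sup_edge w hxy.ne (G := F.deleteEdges {s(x, y)}) (by simp)
  rw [deleteEdges_sup_edge hxy] at hwF
  rw [totalWeight_sup_edge w huv.ne fun h => hsep h.reachable] at hle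
  omega

end Forest

theorem stmt7 {V : Type*} [Fintype V] (W F : SimpleGraph V) (w : Sym2 V → ℕ)
    (hsf : IsSpanningForest W F)
    (hmax : ∀ F', IsSpanningForest W F' → totalWeight F' w ≤ totalWeight F w) :
    ∀ (k : ℕ) (a b : V),
      (∃ x, (restrictW W w k).Adj a x) → (∃ y, (restrictW W w k).Adj b y) →
      ((restrictW F w k).Reachable a b ↔ (restrictW W w k).Reachable a b) := by
  intro k a b _ _
  refine ⟨fun h => h.mono (restrictW_mono hsf.1), fun h => reachable_le_of_adj_le ?_ _ _ h⟩
  exact fun p q hpq => hsf.reachable_restrictW_of_adj hmax hpq.1 hpq.2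
end

section
/- For a graph G with arboricity ρ, the sum over all edges (u,v) of min{d(u), d(v)} is at most 2ρ·m, where m is the number of edges. -/
/-!
Peeling off leaves shows that a finite forest admits an injective choice of one endpoint per
edge. Hence, for any vertex weights `d`, the sum over the edges of a forest of
`min (d u) (d v)` is at most `∑ v, d v`; with `d` the degree function of `G` this is `2m`.
Every edge of `G` lies in one of the `ρ` forests, so summing over them gives `2ρm`.
-/

open SimpleGraph

namespace SimpleGraph

variable {V : Type*} {F : SimpleGraph V}

theorem IsAcyclic.exists_existsUnique_adj [Finite F.edgeSet] (hF : F.IsAcyclic) {u v : V}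
    (huv : F.Adj u v) : ∃ a, ∃! x, F.Adj a x := by
  have : Nonempty V := ⟨u⟩
  obtain ⟨a, b, p, hp, hmax⟩ := Walk.exists_isPath_forall_isPath_length_le_length F
  have hnil : ¬p.Nil := by
    have := hmax u v (Walk.cons huv .nil) (by simp [huv.ne])
    intro h
    simp [h.length_eq_zero] at this
  refine ⟨a, p.snd, p.adj_snd hnil, fun z hz => hF.eq_snd_of_adj_start hp hz ?_⟩
  by_contra hzp
  have := hmax z b (p.cons hz.symm) (hp.cons hzp)
  simp at this

theorem IsAcyclic.exists_injOn_mem_edgeSet [Finite F.edgeSet] (hF : F.IsAcyclic) :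
    ∃ f : Sym2 V → V, (∀ e ∈ F.edgeSet, f e ∈ e) ∧ F.edgeSet.InjOn f := by
  classical
  induction h : F.edgeSet.ncard generalizing F with
  | zero =>
    have hempty : F.edgeSet = ∅ := (Set.ncard_eq_zero).1 h
    exact ⟨fun e => e.out.1, by simp [hempty], by simp [hempty]⟩
  | succ n ih =>
    obtain ⟨e, he⟩ := Set.nonempty_of_ncard_ne_zero (ne_of_eq_of_ne h n.succ_ne_zero)
    induction e using Sym2.ind with | _ u v
    obtain ⟨a, x, hax, hleaf⟩ := hF.exists_existsUnique_adj (F.mem_edgeSet.1 he)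
    have hedge_of_mem : ∀ e ∈ F.edgeSet, a ∈ e → e = s(a, x) := by
      rintro e he hae
      obtain ⟨z, rfl⟩ := Sym2.mem_iff_exists.1 hae
      rw [hleaf z he]
    set F' := F.deleteEdges {s(a, x)}
    have hF' : F'.edgeSet = F.edgeSet \ {s(a, x)} := edgeSet_deleteEdges _
    have : Finite F'.edgeSet := Finite.Set.subset _ (edgeSet_mono (F.deleteEdges_le _))
    obtain ⟨f, hmem, hinj⟩ := ih (hF.anti (F.deleteEdges_le _))
      (by rw [hF', Set.ncard_sdiff_singleton_of_mem (F.mem_edgeSet.2 hax), h, Nat.add_sub_cancel])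
    have hmem' : ∀ e ∈ F.edgeSet, e ≠ s(a, x) → f e ∈ e := fun e he hne =>
      hmem e (hF' ▸ ⟨he, hne⟩)
    obtain ⟨g, hg_leaf, hg_ne⟩ : ∃ g : Sym2 V → V, g s(a, x) = a ∧ ∀ e ≠ s(a, x), g e = f e :=
      ⟨Function.update f s(a, x) a, by simp, fun e hne => Function.update_of_ne hne _ _⟩
    have hg_eq_a : ∀ e ∈ F.edgeSet, g e = a → e = s(a, x) := by
      intro e he hge
      by_contra hne
      rw [hg_ne e hne] at hge
      exact hne (hedge_of_mem e he (hge ▸ hmem' e he hne))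
    refine ⟨g, fun e he => ?_, fun e₁ he₁ e₂ he₂ hg => ?_⟩
    · by_cases hne : e = s(a, x)
      · simp [hne, hg_leaf]
      · simpa [hg_ne e hne] using hmem' e he hne
    · by_cases h₁ : e₁ = s(a, x)
      · exact h₁.trans (hg_eq_a e₂ he₂ (by rw [← hg, h₁, hg_leaf])).symm
      by_cases h₂ : e₂ = s(a, x)
      · exact (hg_eq_a e₁ he₁ (by rw [hg, h₂, hg_leaf])).trans h₂.symm
      rw [hg_ne e₁ h₁, hg_ne e₂ h₂] at hg
      exact hinj (hF' ▸ ⟨he₁, h₁⟩) (hF' ▸ ⟨he₂, h₂⟩) hg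

theorem IsAcyclic.sum_le_sum_of_forall_mem_le [Fintype V] {M : Type*} [AddCommMonoid M]
    [PartialOrder M] [IsOrderedAddMonoid M] [CanonicallyOrderedAdd M] (hF : F.IsAcyclic)
    {s : Finset (Sym2 V)} (hs : ↑s ⊆ F.edgeSet) {w : Sym2 V → M} {d : V → M}
    (hwd : ∀ e ∈ s, ∀ v ∈ e, w e ≤ d v) : ∑ e ∈ s, w e ≤ ∑ v, d v := by
  classical
  obtain ⟨f, hmem, hinj⟩ := hF.exists_injOn_mem_edgeSet
  calc ∑ e ∈ s, w e
      ≤ ∑ e ∈ s, d (f e) := Finset.sum_le_sum fun e he => hwd e he _ (hmem e (hs he))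
    _ = ∑ v ∈ s.image f, d v := (Finset.sum_image fun _ h₁ _ h₂ => hinj (hs h₁) (hs h₂)).symm
    _ ≤ ∑ v, d v := Finset.sum_le_sum_of_subset (Finset.subset_univ _)

theorem sum_ncard_neighborSet [Fintype V] (G : SimpleGraph V) :
    ∑ v, (G.neighborSet v).ncard = 2 * G.edgeSet.ncard := by
  classical
  have hdeg : ∀ v, (G.neighborSet v).ncard = G.degree v := fun v => by
    rw [← card_neighborSet_eq_degree, ← Nat.card_eq_fintype_card, Nat.card_coe_set_eq]
  simp_rw [hdeg, G.sum_degrees_eq_twice_card_edges, ← coe_edgeFinset, Set.ncard_coe_finset]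

end SimpleGraph

theorem Finset.sum_le_sum_sum_filter_of_forall_exists {ι α M : Type*} [Fintype ι]
    [AddCommMonoid M] [PartialOrder M] [IsOrderedAddMonoid M] [CanonicallyOrderedAdd M]
    {s : Finset α} {p : ι → α → Prop} [∀ i, DecidablePred (p i)] (h : ∀ a ∈ s, ∃ i, p i a)
    (f : α → M) : ∑ a ∈ s, f a ≤ ∑ i, ∑ a ∈ s with p i a, f a := by
  calc ∑ a ∈ s, f a
      ≤ ∑ a ∈ s, ∑ i, if p i a then f a else 0 := by
        refine Finset.sum_le_sum fun a ha => ?_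
        obtain ⟨i, hi⟩ := h a ha
        calc f a = if p i a then f a else 0 := (if_pos hi).symm
          _ ≤ _ := Finset.single_le_sum (f := fun i => if p i a then f a else 0)
            (fun _ _ => zero_le) (Finset.mem_univ i)
    _ = ∑ i, ∑ a ∈ s with p i a, f a := by
      rw [Finset.sum_comm]
      simp only [Finset.sum_filter]

theorem Sym2.lift_min_le_of_mem {α β : Type*} [LinearOrder β] (d : α → β) {e : Sym2 α} {v : α}
    (hv : v ∈ e) : Sym2.lift ⟨fun u v => min (d u) (d v), fun _ _ => min_comm _ _⟩ e ≤ d v := by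
  induction e using Sym2.ind with | _ a b
  rcases Sym2.mem_iff.1 hv with rfl | rfl
  exacts [min_le_left _ _, min_le_right _ _]

theorem stmt14_general {V : Type*} [Fintype V] (G : SimpleGraph V) (ρ : ℕ)
    (F : Fin ρ → SimpleGraph V)
    (hforest : ∀ i, (F i).IsAcyclic)
    (hcover : ∀ a b, G.Adj a b → ∃ i, (F i).Adj a b) :
    (∑ᶠ e ∈ G.edgeSet,
        Sym2.lift ⟨fun u v => min (G.neighborSet u).ncard (G.neighborSet v).ncard,
          fun u v => min_comm _ _⟩ e)
      ≤ 2 * ρ * G.edgeSet.ncard := by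
  classical
  have hcover_edge : ∀ e ∈ G.edgeSet.toFinset, ∃ i, e ∈ (F i).edgeSet := by
    intro e he
    induction e using Sym2.ind with | _ u v
    exact hcover u v (by simpa using he)
  rw [finsum_mem_eq_toFinset_sum]
  calc _ ≤ _ := Finset.sum_le_sum_sum_filter_of_forall_exists hcover_edge _
    _ ≤ ∑ _i : Fin ρ, 2 * G.edgeSet.ncard :=
      Finset.sum_le_sum fun i _ => G.sum_ncard_neighborSet ▸
        (hforest i).sum_le_sum_of_forall_mem_le (fun e he => (Finset.mem_filter.1 he).2)
          fun e _ v hv => Sym2.lift_min_le_of_mem _ hv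
    _ = 2 * ρ * G.edgeSet.ncard := by
      rw [Finset.sum_const, Finset.card_univ, Fintype.card_fin, smul_eq_mul]
      ring

theorem stmt14 {V : Type*} [Fintype V] (G : SimpleGraph V) (ρ : ℕ)
    (F : Fin ρ → SimpleGraph V)
    (hle : ∀ i, F i ≤ G) (hforest : ∀ i, (F i).IsAcyclic)
    (hcover : ∀ a b, G.Adj a b → ∃ i, (F i).Adj a b) :
    (∑ᶠ e ∈ G.edgeSet,
        Sym2.lift ⟨fun u v => min (G.neighborSet u).ncard (G.neighborSet v).ncard,
          fun u v => min_comm _ _⟩ e)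
      ≤ 2 * ρ * G.edgeSet.ncard :=
  stmt14_general G ρ F hforest hcover
end
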